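/- Suppose ∑_{j=1}^{r-1} (e_j − 1) = d − 1 and τ ∈ S_d is a d-cycle. If (σ_1, ..., σ_{r-1}) and (σ'_1, ..., σ'_{r-1}) are both factorizations of τ of type (e_1, ..., e_{r-1}) and supp(σ_j) = supp(σ'_j) for every 1 ≤ j ≤ r−1, then σ_j = σ'_j for every j. Consequently, the map sending a factorization to its factorization graph is a bijection from Fac(d, r, τ; e_1, ..., e_{r-1}) onto the set G*_S(d, r, τ; e_1, ..., e_{r-1}) of factorization graphs. -/

import Mathlib

open Equiv Equiv.Perm SimpleGraph

/-- Every edge of `G` joins an `S`-vertex (a `Sum.inl`) to a `[d]`-vertex (a `Sum.inr`). -/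
def IsBipartiteSD {k d : ℕ} (G : SimpleGraph (Fin k ⊕ Fin d)) : Prop :=
  (∀ a b : Fin k, ¬ G.Adj (Sum.inl a) (Sum.inl b)) ∧
    ∀ x y : Fin d, ¬ G.Adj (Sum.inr x) (Sum.inr y)

/-- `G ∈ 𝒢_S(d, r; e₁, …, e_{r-1})`: an `S`-`[d]` bipartite graph in which the `S`-vertex
`s_j` has degree `e j`. -/
def MemGS {k d : ℕ} (G : SimpleGraph (Fin k ⊕ Fin d)) (e : Fin k → ℕ) : Prop :=
  IsBipartiteSD G ∧ ∀ j : Fin k, (G.neighborSet (Sum.inl j)).ncard = e j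

/-- `(σ₁, …, σ_{r-1})` is a factorization of `τ` of type `(e₁, …, e_{r-1})`:
each `σ j` is an `e j`-cycle and the ordered product is `τ`. -/
def IsFactorization {k d : ℕ} (τ : Perm (Fin d)) (e : Fin k → ℕ)
    (σ : Fin k → Perm (Fin d)) : Prop :=
  (∀ j, (σ j).IsCycle ∧ (σ j).support.card = e j) ∧ (List.ofFn σ).prod = τ

/-- The factorization graph of `σ`: the `S`-vertex `s_j` is joined to the points of the
support of `σ j`. -/
def facGraph {k d : ℕ} (σ : Fin k → Perm (Fin d)) : SimpleGraph (Fin k ⊕ Fin d) :=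
  SimpleGraph.fromRel (fun u v => ∃ (j : Fin k) (x : Fin d),
    u = Sum.inl j ∧ v = Sum.inr x ∧ x ∈ (σ j).support)

/-- Delete all edges incident to `v` (the components of the other vertices are then
exactly the components obtained by removing the vertex `v`). -/
def delV {W : Type*} (G : SimpleGraph W) (v : W) : SimpleGraph W :=
  G.deleteEdges {e : Sym2 W | v ∈ e}

/-- The `[d]`-vertex set of the connected component of `w` after removing the vertex `v`. -/
def compD {k d : ℕ} (G : SimpleGraph (Fin k ⊕ Fin d)) (v w : Fin k ⊕ Fin d) : Set (Fin d) :=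
  {y : Fin d | (delV G v).Reachable w (Sum.inr y)}

/-- `P` is a consecutive piece of the circle `C_γ`. -/
def IsConsecPiece {d : ℕ} (γ : Perm (Fin d)) (P : Set (Fin d)) : Prop :=
  ∃ x ∈ γ.support, ∃ m : ℕ, 1 ≤ m ∧ P = (fun i : ℕ => (γ ^ i) x) '' Set.Iio m

/-- The counterclockwise position of `y` on `C_γ`, starting from `ν`. -/
noncomputable def ccwPos {d : ℕ} (γ : Perm (Fin d)) (ν y : Fin d) : ℕ :=
  sInf {n : ℕ | 1 ≤ n ∧ (γ⁻¹ ^ n) ν = y}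

/-- The `S`-vertex `s` has the consecutive partition property (CPP) on `(G, γ)`: the
`[d]`-vertex sets of the components obtained by removing `s` partition `C_γ` into
consecutive pieces. -/
def HasCPP {k d : ℕ} (G : SimpleGraph (Fin k ⊕ Fin d)) (γ : Perm (Fin d)) (s : Fin k) : Prop :=
  ∀ x ∈ γ.support, IsConsecPiece γ (compD G (Sum.inl s) (Sum.inr x))

/-- The `[d]`-vertex `ν` has the counterclockwise increasing consecutive partition property
(CICPP) on `(G, γ)`: the `[d]`-vertex sets of the components obtained by removing `ν`
partition `C_γ ∖ {ν}` into consecutive pieces, and reading counterclockwise from `ν`, the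
pieces occur in the order of the increasing `S`-vertices incident to `ν`. -/
def HasCICPP {k d : ℕ} (G : SimpleGraph (Fin k ⊕ Fin d)) (γ : Perm (Fin d)) (ν : Fin d) :
    Prop :=
  (∀ j : Fin k, G.Adj (Sum.inr ν) (Sum.inl j) →
    IsConsecPiece γ (compD G (Sum.inr ν) (Sum.inl j))) ∧
  (∀ j j' : Fin k, G.Adj (Sum.inr ν) (Sum.inl j) → G.Adj (Sum.inr ν) (Sum.inl j') → j ≠ j' →
    Disjoint (compD G (Sum.inr ν) (Sum.inl j)) (compD G (Sum.inr ν) (Sum.inl j'))) ∧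
  (∀ y ∈ γ.support, y ≠ ν →
    ∃ j : Fin k, G.Adj (Sum.inr ν) (Sum.inl j) ∧ y ∈ compD G (Sum.inr ν) (Sum.inl j)) ∧
  (∀ j j' : Fin k, G.Adj (Sum.inr ν) (Sum.inl j) → G.Adj (Sum.inr ν) (Sum.inl j') → j < j' →
    ∀ y ∈ compD G (Sum.inr ν) (Sum.inl j), ∀ y' ∈ compD G (Sum.inr ν) (Sum.inl j'),
      ccwPos γ ν y < ccwPos γ ν y')

/-! Let `σ₁ ⋯ σₖ = τ` with `∑ (#supp σᵢ - 1) = d - 1`. Multiplying a permutation by `g` lowers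
its number of orbits by at most `#supp g - 1`; starting from the `d` orbits of `1`, this forces
`c⁻¹ * τ` to have at least `#supp c` orbits for every factor `c`. Outside `supp c` the
permutation `c⁻¹ * τ` acts as `τ`, so when `τ` is a `d`-cycle each of its orbits meets `supp c`,
and therefore meets it in exactly one point. Hence `c` is the first-return map of `τ` to
`supp c`, which depends only on the support. -/

open Finset

namespace Equiv.Perm

variable {α : Type*}

noncomputable def numOrbits (π : Perm α) : ℕ :=
  Nat.card (Quotient (SameCycle.setoid π))

theorem numOrbits_one : numOrbits (1 : Perm α) = Nat.card α :=
  Nat.card_congr <|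
    (Quotient.congrRight fun _ _ => by rw [Setoid.bot_def]; exact sameCycle_one).trans
      Setoid.quotientBotEquiv

theorem numOrbits_conj (u π : Perm α) : numOrbits (u * π * u⁻¹) = numOrbits π :=
  Nat.card_congr <| Quotient.congr u.symm fun _ _ => sameCycle_conj

theorem SameCycle.of_mul_of_forall_apply_eq_self [Finite α] {π σ : Perm α} {x y : α}
    (hσ : ∀ z, π.SameCycle x z → σ z = z) (h : (π * σ).SameCycle x y) : π.SameCycle x y := by
  obtain ⟨n, -, rfl⟩ := h.exists_pow_eq'
  have hpow : ∀ n : ℕ, ((π * σ) ^ n) x = (π ^ n) x := by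
    intro n
    induction n with
    | zero => rfl
    | succ n ih =>
      rw [pow_succ', mul_apply, ih, mul_apply, hσ _ (sameCycle_pow_right.2 (.refl _ _)),
        ← mul_apply, ← pow_succ']
  rw [hpow]
  exact sameCycle_pow_right.2 (.refl _ _)

theorem eq_of_sameCycle_of_card_le_numOrbits {π : Perm α} {A : Finset α}
    (hA : ∀ x, ∃ a ∈ A, π.SameCycle x a) (hcard : #A ≤ numOrbits π) {a b : α} (ha : a ∈ A)
    (hb : b ∈ A) (hab : π.SameCycle a b) : a = b := by
  let φ : A → Quotient (SameCycle.setoid π) := fun a => ⟦a.1⟧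
  have hφ_surj : Function.Surjective φ := by
    refine Quotient.ind fun x => ?_
    obtain ⟨a, ha, hxa⟩ := hA x
    exact ⟨⟨a, ha⟩, Quotient.sound hxa.symm⟩
  have hφ_card : Nat.card A = numOrbits π :=
    le_antisymm (by rwa [Nat.card_eq_fintype_card, Fintype.card_coe])
      (Nat.card_le_card_of_surjective φ hφ_surj)
  have hφ_inj := ((Nat.bijective_iff_surjective_and_card φ).2 ⟨hφ_surj, hφ_card⟩).injective
  exact congrArg Subtype.val (@hφ_inj ⟨a, ha⟩ ⟨b, hb⟩ (Quotient.sound hab))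

theorem inv_mul_pow_succ_apply {c τ : Perm α} {x : α} {n : ℕ}
    (h : ∀ i < n, c ((τ ^ (i + 1)) x) = (τ ^ (i + 1)) x) :
    ((c⁻¹ * τ) ^ (n + 1)) x = c⁻¹ ((τ ^ (n + 1)) x) := by
  induction n with
  | zero => simp
  | succ n ih =>
    rw [pow_succ', mul_apply, ih fun i hi => h i (by omega), mul_apply,
      inv_eq_iff_eq.2 (h n (by omega)).symm, ← mul_apply τ, ← pow_succ']

variable [Fintype α] [DecidableEq α]

/-- An orbit of `π` avoiding `supp σ` is also an orbit of `π * σ`. Sending the other orbits of `π`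
to a point of `supp σ` in them gives an injection into `(π * σ)`-orbits ⊕ `supp σ` that misses
the `(π * σ)`-orbit of any point of `supp σ`. -/
theorem numOrbits_le_numOrbits_mul_add (π σ : Perm α) :
    numOrbits π ≤ numOrbits (π * σ) + (#σ.support - 1) := by
  obtain hσ | ⟨a₀, ha₀⟩ := σ.support.eq_empty_or_nonempty
  · rw [support_eq_empty_iff.1 hσ, mul_one]
    exact Nat.le_add_right _ _
  classical
  let F : Quotient (SameCycle.setoid π) → Quotient (SameCycle.setoid (π * σ)) ⊕ σ.support :=
    fun q => if h : ∃ a : σ.support, q = ⟦a.1⟧ then .inr h.choose else .inl ⟦q.out⟧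
  have hfree : ∀ q : Quotient (SameCycle.setoid π), (¬ ∃ a : σ.support, q = ⟦a.1⟧) →
      ∀ y, (π * σ).SameCycle q.out y → q = ⟦y⟧ := by
    intro q hq y hy
    refine (Quotient.out_eq q).symm.trans (Quotient.sound ?_)
    refine SameCycle.of_mul_of_forall_apply_eq_self (fun z hz => ?_) hy
    by_contra hσz
    exact hq ⟨⟨z, mem_support.2 hσz⟩, (Quotient.out_eq q).symm.trans (Quotient.sound hz)⟩
  have hF_inj : Function.Injective F := by
    intro q q' hqq'
    by_cases hq : ∃ a : σ.support, q = ⟦a.1⟧ <;> by_cases hq' : ∃ a : σ.support, q' = ⟦a.1⟧ <;>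
      simp only [F, hq, hq', dif_pos, dif_neg, not_false_eq_true, reduceCtorEq, Sum.inl.injEq,
        Sum.inr.injEq] at hqq'
    · rw [hq.choose_spec, hq'.choose_spec, hqq']
    · rw [hfree q hq _ (Quotient.exact hqq'), Quotient.out_eq]
  have hF_not_surj : ¬ Function.Surjective F := by
    intro hsurj
    obtain ⟨q, hq⟩ := hsurj (.inl ⟦a₀⟧)
    by_cases h : ∃ a : σ.support, q = ⟦a.1⟧
    · simp only [F, dif_pos h, reduceCtorEq] at hq
    · simp only [F, h, dif_neg, not_false_eq_true, Sum.inl.injEq] at hq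
      exact h ⟨⟨a₀, ha₀⟩, hfree q h a₀ (Quotient.exact hq)⟩
  have hlt := Fintype.card_lt_of_injective_not_surjective F hF_inj hF_not_surj
  rw [Fintype.card_sum, Fintype.card_coe, ← Nat.card_eq_fintype_card,
    ← Nat.card_eq_fintype_card] at hlt
  unfold numOrbits
  omega

theorem numOrbits_le_numOrbits_mul_prod_add (l : List (Perm α)) (π : Perm α) :
    numOrbits π ≤ numOrbits (π * l.prod) + (l.map fun g => #g.support - 1).sum := by
  induction l generalizing π with
  | nil => simp
  | cons c l ih =>
    have := ih (π * c)
    rw [List.prod_cons, ← mul_assoc, List.map_cons, List.sum_cons]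
    have := numOrbits_le_numOrbits_mul_add π c
    omega

theorem card_add_le_numOrbits_inv_mul_prod_add {l : List (Perm α)} {c : Perm α} (hc : c ∈ l) :
    Nat.card α + (#c.support - 1) ≤
      numOrbits (c⁻¹ * l.prod) + (l.map fun g => #g.support - 1).sum := by
  obtain ⟨s, t, rfl⟩ := List.append_of_mem hc
  have hs := numOrbits_le_numOrbits_mul_prod_add s 1
  -- `c⁻¹ * (s.prod * (c * t.prod))` is the conjugate `c⁻¹ * s.prod * c` followed by `t.prod`
  have ht := numOrbits_le_numOrbits_mul_prod_add t (c⁻¹ * s.prod * c⁻¹⁻¹)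
  rw [one_mul, numOrbits_one] at hs
  rw [numOrbits_conj, inv_inv, mul_assoc, mul_assoc, ← List.prod_cons, ← List.prod_append] at ht
  simp only [List.map_append, List.map_cons, List.sum_append, List.sum_cons]
  omega

theorem card_support_le_numOrbits_inv_mul_prod {l : List (Perm α)} {c : Perm α} (hc : c ∈ l)
    (hl : (l.map fun g => #g.support - 1).sum < Nat.card α) :
    #c.support ≤ numOrbits (c⁻¹ * l.prod) := by
  have := card_add_le_numOrbits_inv_mul_prod_add hc
  omega

noncomputable def firstReturn (τ : Perm α) (A : Finset α) (x : α) : α :=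
  (τ ^ (sInf {n | (τ ^ (n + 1)) x ∈ A} + 1)) x

theorem firstReturn_mem {τ : Perm α} (hτ : τ.IsCycle) (hτ_univ : τ.support = univ)
    {A : Finset α} (hA : A.Nonempty) (x : α) : firstReturn τ A x ∈ A := by
  obtain ⟨a, ha⟩ := hA
  obtain ⟨n, hn⟩ := hτ.exists_pow_eq (x := τ x) (y := a)
    (mem_support.1 (by simp [hτ_univ])) (mem_support.1 (by simp [hτ_univ]))
  refine Nat.sInf_mem (s := {n | (τ ^ (n + 1)) x ∈ A}) ⟨n, ?_⟩
  rwa [Set.mem_ofPred_eq, pow_succ, mul_apply, hn]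

/-- The orbit of `x` under `c⁻¹ * τ` follows `τ` until it first returns to `supp c`. -/
theorem sameCycle_inv_mul_inv_firstReturn (c τ : Perm α) (x : α) :
    (c⁻¹ * τ).SameCycle x (c⁻¹ (firstReturn τ c.support x)) := by
  refine ⟨((sInf {n | (τ ^ (n + 1)) x ∈ c.support} + 1 : ℕ) : ℤ), ?_⟩
  rw [zpow_natCast]
  exact inv_mul_pow_succ_apply fun i hi => notMem_support.1 (Nat.notMem_of_lt_sInf hi)

theorem apply_eq_firstReturn {τ c : Perm α} (hτ : τ.IsCycle) (hτ_univ : τ.support = univ)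
    (hc : #c.support ≤ numOrbits (c⁻¹ * τ)) {a : α} (ha : a ∈ c.support) :
    c a = firstReturn τ c.support a := by
  have hmem : ∀ x, c⁻¹ (firstReturn τ c.support x) ∈ c.support := fun x => by
    rw [← support_inv, apply_mem_support, support_inv]
    exact firstReturn_mem hτ hτ_univ ⟨a, ha⟩ x
  have hreturn := eq_of_sameCycle_of_card_le_numOrbits
    (fun x => ⟨_, hmem x, sameCycle_inv_mul_inv_firstReturn c τ x⟩) hc ha (hmem a)
    (sameCycle_inv_mul_inv_firstReturn c τ a)
  exact (inv_eq_iff_eq.1 hreturn.symm).symm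

theorem eq_of_support_eq {τ c c' : Perm α} (hτ : τ.IsCycle) (hτ_univ : τ.support = univ)
    (hc : #c.support ≤ numOrbits (c⁻¹ * τ)) (hc' : #c'.support ≤ numOrbits (c'⁻¹ * τ))
    (h : c.support = c'.support) : c = c' := by
  ext x
  by_cases hx : x ∈ c.support
  · rw [apply_eq_firstReturn hτ hτ_univ hc hx, apply_eq_firstReturn hτ hτ_univ hc' (h ▸ hx), h]
  · rw [notMem_support.1 hx, notMem_support.1 (h ▸ hx)]

end Equiv.Perm

theorem facGraph_adj_inl_inr {k d : ℕ} (σ : Fin k → Perm (Fin d)) (j : Fin k) (x : Fin d) :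
    (facGraph σ).Adj (Sum.inl j) (Sum.inr x) ↔ x ∈ (σ j).support := by
  simp [facGraph, SimpleGraph.fromRel_adj]

theorem support_eq_of_facGraph_eq {k d : ℕ} {σ σ' : Fin k → Perm (Fin d)}
    (h : facGraph σ = facGraph σ') (j : Fin k) : (σ j).support = (σ' j).support := by
  ext x
  rw [← facGraph_adj_inl_inr, ← facGraph_adj_inl_inr, h]

theorem factorization_to_graph_bijective_general (d r : ℕ) (hd : 2 ≤ d)
    (τ : Perm (Fin d)) (hτ : τ.IsCycle) (hτd : τ.support.card = d)
    (e : Fin (r - 1) → ℕ)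
    (hsum : ∑ j, (e j - 1) = d - 1) :
    (∀ σ σ' : Fin (r - 1) → Perm (Fin d),
      IsFactorization τ e σ → IsFactorization τ e σ' →
      (∀ j, (σ j).support = (σ' j).support) → σ = σ') ∧
    Set.BijOn (facGraph (k := r - 1) (d := d))
      {σ | IsFactorization τ e σ} (facGraph '' {σ | IsFactorization τ e σ}) := by
  have hτ_univ : τ.support = Finset.univ := Finset.eq_univ_of_card _ (by simpa using hτd)
  have hbound : ∀ σ, IsFactorization τ e σ → ∀ j,
      #(σ j).support ≤ numOrbits ((σ j)⁻¹ * τ) := by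
    rintro σ ⟨hσ, rfl⟩ j
    refine card_support_le_numOrbits_inv_mul_prod (List.mem_ofFn.2 ⟨j, rfl⟩) ?_
    simp only [List.map_ofFn, List.sum_ofFn, Function.comp_apply, hσ, Nat.card_eq_fintype_card,
      Fintype.card_fin, hsum]
    omega
  have hinj : ∀ σ σ' : Fin (r - 1) → Perm (Fin d),
      IsFactorization τ e σ → IsFactorization τ e σ' →
      (∀ j, (σ j).support = (σ' j).support) → σ = σ' := fun σ σ' hσ hσ' h =>
    funext fun j => eq_of_support_eq hτ hτ_univ (hbound σ hσ j) (hbound σ' hσ' j) (h j)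
  exact ⟨hinj, Set.InjOn.bijOn_image fun σ hσ σ' hσ' h =>
    hinj σ σ' hσ hσ' (support_eq_of_facGraph_eq h)⟩

/-- **Corollary 3.11.** Assume `∑ (e_j - 1) = d - 1` and `τ` is a `d`-cycle. Two
factorizations of `τ` of type `(e₁, …, e_{r-1})` whose corresponding cycles have the same
supports coincide; consequently the map sending a factorization to its factorization
graph is a bijection from `Fac(d, r, τ; e₁, …, e_{r-1})` onto the set
`𝒢*_S(d, r, τ; e₁, …, e_{r-1})` of factorization graphs. -/
theorem factorization_to_graph_bijective (d r : ℕ) (hd : 2 ≤ d) (hr : 2 ≤ r)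
    (τ : Perm (Fin d)) (hτ : τ.IsCycle) (hτd : τ.support.card = d)
    (e : Fin (r - 1) → ℕ) (he : ∀ j, 2 ≤ e j)
    (hsum : ∑ j, (e j - 1) = d - 1) :
    (∀ σ σ' : Fin (r - 1) → Perm (Fin d),
      IsFactorization τ e σ → IsFactorization τ e σ' →
      (∀ j, (σ j).support = (σ' j).support) → σ = σ') ∧
    Set.BijOn (facGraph (k := r - 1) (d := d))
      {σ | IsFactorization τ e σ} (facGraph '' {σ | IsFactorization τ e σ}) :=
  factorization_to_graph_bijective_general d r hd τ hτ hτd e hsum
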